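/- The points Q₁ = (0, 2, 0) and Q₂ = (4, 0, 0) in coordinates (u₁, u₂, u₄) are equilibrium points of the vacuum dynamical system for f(R) = R + αR² gravity, i.e. the vector field G vanishes at Q₁ and Q₂ (note that u₁ - u₄² + 1 equals 1 at Q₁ and 5 at Q₂, so G is well defined there). -/
import Mathlib


/-- The vacuum dynamical system for Bianchi I cosmology in `f(R) = R + αR²`
gravity, where `Γ = (1 + 2αR)/(2αR)` becomes `l(u₁,u₂,u₄) = u₂/(2(u₁ - u₄² + 1))`,
in coordinates `(u₁, u₂, u₄)` (defined where `u₁ - u₄² + 1 ≠ 0`). -/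
noncomputable def quadraticVacuumField (u₁ u₂ u₄ : ℝ) : ℝ × ℝ × ℝ :=
  (u₁^2 + u₁ * (u₂ - u₄^2 - 3) + 2 * (u₂ + 2*u₄^2 - 2),
   -u₁ * u₂ * u₂ / (2 * (u₁ - u₄^2 + 1)) + 2 * u₂ * (u₂ - u₄^2 - 2),
   u₄ * (u₁ + u₂ - u₄^2 + 1))

/-- The points `Q₁ = (0, 2, 0)` and `Q₂ = (4, 0, 0)` are equilibrium points of the
vacuum dynamical system for `f(R) = R + αR²` gravity (note `u₁ - u₄² + 1` equals
`1` at `Q₁` and `5` at `Q₂`, so the field is well defined there). -/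
theorem quadratic_vacuum_equilibria :
    quadraticVacuumField 0 2 0 = (0, 0, 0) ∧
    quadraticVacuumField 4 0 0 = (0, 0, 0) := by
  constructor <;> simp [quadraticVacuumField] <;> norm_num
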